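/- arXiv:2203.02159 — 6 statements merged into one kernel-verified Lean document; each statement's English description precedes it below -/
import Mathlib

section
/- For all positive real numbers a and b with a ≠ b, ((a+b)/2 − √(ab))/(b − a) = (1/2)·(√b − √a)/(√b + √a), and consequently |((a+b)/2 − √(ab))/(b − a)| ≤ (1/4)·|log b − log a|. -/
/-!
With `a = x²` and `b = y²`, the numerator is `(y - x)² / 2` and the denominator `(y - x)(y + x)`.
For the bound, `(y - x)/(y + x) ≤ 1 - x/y ≤ log (y/x)` when `x ≤ y`, and `log b - log a` is twice
`log y - log x`.
-/

open Real

-- When `y = ± x` both sides are `0`, by the convention `z / 0 = 0`.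
theorem arith_sub_geom_sq_div {K : Type*} [Field K] [NeZero (2 : K)] (x y : K) :
    ((x ^ 2 + y ^ 2) / 2 - x * y) / (y ^ 2 - x ^ 2) = 1 / 2 * (y - x) / (y + x) := by
  rcases eq_or_ne (y - x) 0 with hxy | hxy
  · rw [sub_eq_zero.mp hxy]; simp
  rcases eq_or_ne (y + x) 0 with hxy' | hxy'
  · rw [eq_neg_of_add_eq_zero_left hxy']; simp
  rw [show y ^ 2 - x ^ 2 = (y + x) * (y - x) by ring]
  field_simp
  ring

theorem abs_sub_div_add_le_abs_log_sub_log {x y : ℝ} (hx : 0 < x) (hy : 0 < y) :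
    |y - x| / (y + x) ≤ |log y - log x| := by
  wlog hxy : x ≤ y generalizing x y
  · simpa only [abs_sub_comm, add_comm] using this hy hx (le_of_not_ge hxy)
  rw [abs_of_nonneg (sub_nonneg.mpr hxy),
    abs_of_nonneg (sub_nonneg.mpr (log_le_log hx hxy)), ← log_div hy.ne' hx.ne']
  calc (y - x) / (y + x) ≤ (y - x) / y := by gcongr; linarith
    _ = 1 - (y / x)⁻¹ := by field_simp
    _ ≤ log (y / x) := one_sub_inv_le_log_of_pos (by positivity)

theorem arith_sub_geom_ratio_general (a b : ℝ) (ha : 0 < a) (hb : 0 < b) :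
    ((a + b) / 2 - Real.sqrt (a * b)) / (b - a)
        = (1 / 2) * (Real.sqrt b - Real.sqrt a) / (Real.sqrt b + Real.sqrt a) ∧
    |((a + b) / 2 - Real.sqrt (a * b)) / (b - a)| ≤ (1 / 4) * |Real.log b - Real.log a| := by
  have hratio := arith_sub_geom_sq_div (√a) (√b)
  rw [sq_sqrt ha.le, sq_sqrt hb.le, ← sqrt_mul ha.le] at hratio
  refine ⟨hratio, ?_⟩
  have hlog := abs_sub_div_add_le_abs_log_sub_log (sqrt_pos.mpr ha) (sqrt_pos.mpr hb)
  rw [log_sqrt ha.le, log_sqrt hb.le, ← sub_div, abs_div, abs_two] at hlog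
  rw [hratio, abs_div, abs_mul, abs_of_pos (by positivity : 0 < √b + √a),
    abs_of_pos one_half_pos, mul_div_assoc]
  linarith

/-- For distinct positive reals, `((a+b)/2 − √(ab))/(b−a) = (1/2)(√b−√a)/(√b+√a)`, and
consequently `|((a+b)/2 − √(ab))/(b−a)| ≤ (1/4)|log b − log a|`. -/
theorem arith_sub_geom_ratio (a b : ℝ) (ha : 0 < a) (hb : 0 < b) (hab : a ≠ b) :
    ((a + b) / 2 - Real.sqrt (a * b)) / (b - a)
        = (1 / 2) * (Real.sqrt b - Real.sqrt a) / (Real.sqrt b + Real.sqrt a) ∧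
    |((a + b) / 2 - Real.sqrt (a * b)) / (b - a)| ≤ (1 / 4) * |Real.log b - Real.log a| :=
  arith_sub_geom_ratio_general a b ha hb
end

section
/- For all positive real numbers a and b with a ≠ b, let ā = (a+b)/2 be the arithmetic mean, ǧ = √(ab) the geometric mean, and â = (b−a)/(log b − log a) the logarithmic mean, and define ρ* = ǧ²/(√â·√ā). Then |ρ* − ā| ≤ (1/4)·|b − a|·|log b − log a|. -/
/-!
Write `A`, `G`, `L` for the arithmetic, geometric and logarithmic means. Putting
`x = (b - a)/(a + b)`, so that `log (b/a) = 2 artanh x`, the bounds `x ≤ artanh x ≤ x/(1 - x²)`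
become `L ≤ A` and `G² ≤ L·A`. These give `G²/A ≤ ρ* ≤ A`, hence
`|ρ* - A| ≤ A - G²/A = (b - a)²/(4A)`, and since `(b - a)² = L·|b - a|·|log b - log a|`
with `L ≤ A`, this is at most `|b - a|·|log b - log a|/4`.
-/

/-- The logarithmic mean of two positive reals: `(b-a)/(log b - log a)` when `a ≠ b`,
and `a` when `a = b`. -/
noncomputable def logMean (a b : ℝ) : ℝ :=
  if a = b then a else (b - a) / (Real.log b - Real.log a)

open Real Finset

section
variable {a b : ℝ}

lemma one_add_div_one_sub_eq_div (ha : 0 < a) (hb : 0 < b) :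
    (1 + (b - a) / (a + b)) / (1 - (b - a) / (a + b)) = b / a := by
  have : a + b ≠ 0 := by positivity
  rw [one_add_div this, one_sub_div this, div_div_div_cancel_right₀ this]
  ring_nf

lemma two_mul_sub_le_add_mul_log_sub_log (ha : 0 < a) (hab : a ≤ b) :
    2 * (b - a) ≤ (a + b) * (log b - log a) := by
  have hb : 0 < b := ha.trans_le hab
  have h := sum_range_le_log_div (x := (b - a) / (a + b)) (by bound)
    ((div_lt_one (by positivity)).2 (by linarith)) 1
  rw [one_add_div_one_sub_eq_div ha hb, log_div hb.ne' ha.ne'] at h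
  simp only [sum_range_one, mul_zero, zero_add, pow_one, Nat.cast_zero, div_one] at h
  rw [div_le_iff₀ (by positivity)] at h
  linarith

lemma two_mul_mul_log_sub_log_le (ha : 0 < a) (hab : a ≤ b) :
    2 * (a * b) * (log b - log a) ≤ b ^ 2 - a ^ 2 := by
  have hb : 0 < b := ha.trans_le hab
  have h := log_div_le_sum_range_add (x := (b - a) / (a + b)) (by bound)
    ((div_lt_one (by positivity)).2 (by linarith)) 0
  rw [one_add_div_one_sub_eq_div ha hb, log_div hb.ne' ha.ne'] at h
  have h1x : 1 - ((b - a) / (a + b)) ^ 2 = 4 * (a * b) / (a + b) ^ 2 := by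
    field_simp
    ring
  have hx : (b - a) / (a + b) / (4 * (a * b) / (a + b) ^ 2) = (b ^ 2 - a ^ 2) / (4 * (a * b)) := by
    field_simp
    ring
  simp only [sum_range_zero, zero_add, mul_zero, pow_one, h1x, hx] at h
  rw [le_div_iff₀ (by positivity)] at h
  linarith

lemma logMean_comm (a b : ℝ) : logMean a b = logMean b a := by
  unfold logMean
  split_ifs with h h' h'
  · exact h
  · exact absurd h.symm h'
  · exact absurd h'.symm h
  · rw [← neg_sub b a, ← neg_sub (log b), neg_div_neg_eq]

lemma logMean_of_ne (hab : a ≠ b) : logMean a b = (b - a) / (log b - log a) := if_neg hab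

lemma logMean_mul_log_sub_log (ha : 0 < a) (hb : 0 < b) :
    logMean a b * (log b - log a) = b - a := by
  unfold logMean
  split_ifs with h
  · simp [h]
  · have : log b - log a ≠ 0 := sub_ne_zero.2 fun h' => h (log_injOn_pos ha hb h'.symm)
    field_simp

lemma logMean_pos (ha : 0 < a) (hb : 0 < b) : 0 < logMean a b := by
  wlog hab : a ≤ b generalizing a b
  · rw [logMean_comm]
    exact this hb ha (le_of_not_ge hab)
  rcases hab.lt_or_eq with hab | rfl
  · rw [logMean_of_ne hab.ne]
    exact div_pos (by linarith) (sub_pos.2 (log_lt_log ha hab))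
  · simpa [logMean] using ha

lemma logMean_le_add_div_two (ha : 0 < a) (hb : 0 < b) : logMean a b ≤ (a + b) / 2 := by
  wlog hab : a ≤ b generalizing a b
  · rw [logMean_comm, add_comm]
    exact this hb ha (le_of_not_ge hab)
  rcases hab.lt_or_eq with hab | rfl
  · rw [logMean_of_ne hab.ne, div_le_iff₀ (sub_pos.2 (log_lt_log ha hab))]
    linarith [two_mul_sub_le_add_mul_log_sub_log ha hab.le]
  · simp [logMean]

lemma mul_le_logMean_mul_add_div_two (ha : 0 < a) (hb : 0 < b) :
    a * b ≤ logMean a b * ((a + b) / 2) := by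
  wlog hab : a ≤ b generalizing a b
  · rw [logMean_comm, add_comm, mul_comm]
    exact this hb ha (le_of_not_ge hab)
  rcases hab.lt_or_eq with hab | rfl
  · rw [logMean_of_ne hab.ne, div_mul_eq_mul_div, le_div_iff₀ (sub_pos.2 (log_lt_log ha hab))]
    nlinarith [two_mul_mul_log_sub_log_le ha hab.le]
  · simp [logMean]

end

lemma abs_div_sqrt_mul_sqrt_sub_le {g l m : ℝ} (hg : 0 ≤ g) (hl : 0 < l) (hlm : l ≤ m)
    (hglm : g ≤ l * m) : |g / (√l * √m) - m| ≤ m - g / m := by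
  have hm : 0 < m := hl.trans_le hlm
  rw [← sqrt_mul hl.le]
  set s := √(l * m)
  have hs : 0 < s := sqrt_pos.2 (by positivity)
  have hsm : s ≤ m := (sqrt_le_sqrt (mul_le_mul_of_nonneg_right hlm hm.le)).trans_eq
    (sqrt_mul_self hm.le)
  have hgs : g / s ≤ m := by
    rw [div_le_iff₀ hs]
    calc g ≤ l * m := hglm
      _ = s * s := (mul_self_sqrt (by positivity)).symm
      _ ≤ m * s := by gcongr
  rw [abs_of_nonpos (sub_nonpos.2 hgs)]
  have : g / m ≤ g / s := by gcongr
  linarith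

theorem special_average_close_to_arith_general (a b : ℝ) (ha : 0 < a) (hb : 0 < b) :
    |Real.sqrt (a * b) ^ 2 / (Real.sqrt (logMean a b) * Real.sqrt ((a + b) / 2)) - (a + b) / 2|
      ≤ (1 / 4) * |b - a| * |Real.log b - Real.log a| := by
  have hA : 0 < (a + b) / 2 := by positivity
  have hL := logMean_pos ha hb
  have hLA := logMean_le_add_div_two ha hb
  have hba : |b - a| = logMean a b * |log b - log a| := by
    rw [← abs_of_pos hL, ← abs_mul, logMean_mul_log_sub_log ha hb]
  calc _ ≤ (a + b) / 2 - a * b / ((a + b) / 2) := by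
        rw [sq_sqrt (by positivity)]
        exact abs_div_sqrt_mul_sqrt_sub_le (by positivity) hL hLA
          (mul_le_logMean_mul_add_div_two ha hb)
    _ = (b - a) ^ 2 / (4 * ((a + b) / 2)) := by
        field_simp
        ring
    _ = 1 / 4 * |b - a| * |log b - log a| * (logMean a b / ((a + b) / 2)) := by
        rw [← sq_abs, sq]
        nth_rw 2 [hba]
        field_simp
    _ ≤ 1 / 4 * |b - a| * |log b - log a| :=
        mul_le_of_le_one_right (by positivity) ((div_le_one hA).2 hLA)

/-- For distinct positive reals, with `ā` the arithmetic mean, `ǧ` the geometric mean and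
`â` the logarithmic mean, the average `ρ* = ǧ²/(√â·√ā)` satisfies
`|ρ* − ā| ≤ (1/4)·|b − a|·|log b − log a|`. -/
theorem special_average_close_to_arith (a b : ℝ) (ha : 0 < a) (hb : 0 < b) (hab : a ≠ b) :
    |Real.sqrt (a * b) ^ 2 / (Real.sqrt (logMean a b) * Real.sqrt ((a + b) / 2)) - (a + b) / 2|
      ≤ (1 / 4) * |b - a| * |Real.log b - Real.log a| :=
  special_average_close_to_arith_general a b ha hb
end

section
/- Fix γ > 1. Let ρ₁, ρ₂, β₁, β₂ be positive reals and u₁, u₂ reals. Define the specific entropy sᵢ = −log βᵢ − (γ−1) log ρᵢ − log 2 and the entropy variables wᵢ = (γ/(γ−1) − sᵢ/(γ−1) − βᵢ uᵢ², 2βᵢ uᵢ, −2βᵢ) for i = 1, 2. Write ρ̄ = (ρ₁+ρ₂)/2, ū = (u₁+u₂)/2, β̄ = (β₁+β₂)/2, m̄ = (ρ₁u₁ + ρ₂u₂)/2, q̄ = (u₁² + u₂²)/2, and let ρ̂ and β̂ denote the logarithmic means of (ρ₁, ρ₂) and (β₁, β₂) respectively. Define the one-dimensional Chandrashekar-type flux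 f = (f¹, f², f³) with f¹ = m̄, f² = ū·m̄ + ρ̄/(2β̄), and f³ = m̄/(2(γ−1)β̂) − (q̄/2)·m̄ + ū²·m̄ + (ρ̄/(2β̄))·ū. Then the contraction of the entropy-variable jump with the flux satisfies (w₂¹ − w₁¹)f¹ + (w₂² − w₁²)f² + (w₂³ − w₁³)f³ = ((ρ₂ − ρ₁)/ρ̂)·m̄ + ρ̄·(u₂ − u₁). -/
/-!
The only non-polynomial terms of the entropy-variable jump `Δw` are the jumps of `log ρ` and
`log β` coming from the specific entropy. The logarithmic mean is exactly the mean for which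
`Δa / â = Δ(log a)`, so the `1/β̂` term of `f³` turns `Δw³ · f³` into `-Δ(log β) · m̄/(γ-1)`,
cancelling the `log β` part of `Δw¹ · f¹`, while the `log ρ` part of `Δw¹ · f¹` is the
`(Δρ/ρ̂) · m̄` on the right. What remains is a rational identity in `ρᵢ, βᵢ, uᵢ`.
-/

theorem sub_div_logMean (a b : ℝ) :
    (b - a) / logMean a b = Real.log b - Real.log a := by
  unfold logMean
  split_ifs with hab
  · simp [hab]
  · exact div_div_cancel₀ (sub_ne_zero.mpr (Ne.symm hab))

theorem entropy_jump_dot_conv_flux_general (γ ρ₁ ρ₂ β₁ β₂ u₁ u₂ : ℝ) (hγ : 1 < γ)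
    (hβ₁ : 0 < β₁) (hβ₂ : 0 < β₂)
    (s₁ s₂ : ℝ)
    (hs₁ : s₁ = -Real.log β₁ - (γ - 1) * Real.log ρ₁ - Real.log 2)
    (hs₂ : s₂ = -Real.log β₂ - (γ - 1) * Real.log ρ₂ - Real.log 2)
    (w₁1 w₁2 w₁3 w₂1 w₂2 w₂3 : ℝ)
    (hw₁1 : w₁1 = γ / (γ - 1) - s₁ / (γ - 1) - β₁ * u₁ ^ 2)
    (hw₁2 : w₁2 = 2 * β₁ * u₁)
    (hw₁3 : w₁3 = -2 * β₁)
    (hw₂1 : w₂1 = γ / (γ - 1) - s₂ / (γ - 1) - β₂ * u₂ ^ 2)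
    (hw₂2 : w₂2 = 2 * β₂ * u₂)
    (hw₂3 : w₂3 = -2 * β₂)
    (ρbar ubar βbar mbar qbar : ℝ)
    (hρbar : ρbar = (ρ₁ + ρ₂) / 2)
    (hubar : ubar = (u₁ + u₂) / 2)
    (hβbar : βbar = (β₁ + β₂) / 2)
    (hmbar : mbar = (ρ₁ * u₁ + ρ₂ * u₂) / 2)
    (hqbar : qbar = (u₁ ^ 2 + u₂ ^ 2) / 2)
    (f1 f2 f3 : ℝ)
    (hf1 : f1 = mbar)
    (hf2 : f2 = ubar * mbar + ρbar / (2 * βbar))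
    (hf3 : f3 = mbar / (2 * (γ - 1) * logMean β₁ β₂) - (qbar / 2) * mbar
        + ubar ^ 2 * mbar + (ρbar / (2 * βbar)) * ubar) :
    (w₂1 - w₁1) * f1 + (w₂2 - w₁2) * f2 + (w₂3 - w₁3) * f3
      = ((ρ₂ - ρ₁) / logMean ρ₁ ρ₂) * mbar + ρbar * (u₂ - u₁) := by
  have hβ_term : (w₂3 - w₁3) * f3 = -((β₂ - β₁) / logMean β₁ β₂) * mbar / (γ - 1)
      + (w₂3 - w₁3) * (-(qbar / 2) * mbar + ubar ^ 2 * mbar + (ρbar / (2 * βbar)) * ubar) := by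
    rw [hf3, hw₁3, hw₂3, ← div_div, ← div_div]
    ring
  rw [hβ_term, sub_div_logMean, sub_div_logMean]
  subst hs₁ hs₂ hw₁1 hw₁2 hw₁3 hw₂1 hw₂2 hw₂3 hρbar hubar hβbar hmbar hqbar hf1 hf2
  have hγ₁ : γ - 1 ≠ 0 := sub_ne_zero.mpr hγ.ne'
  have hβ : β₁ + β₂ ≠ 0 := by positivity
  field_simp
  ring

/-- Contraction of the entropy-variable jump with the one-dimensional Chandrashekar-type
convective flux: `Δw · f = (Δρ/ρ̂)·m̄ + ρ̄·Δu`. -/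
theorem entropy_jump_dot_conv_flux (γ ρ₁ ρ₂ β₁ β₂ u₁ u₂ : ℝ) (hγ : 1 < γ)
    (hρ₁ : 0 < ρ₁) (hρ₂ : 0 < ρ₂) (hβ₁ : 0 < β₁) (hβ₂ : 0 < β₂)
    (s₁ s₂ : ℝ)
    (hs₁ : s₁ = -Real.log β₁ - (γ - 1) * Real.log ρ₁ - Real.log 2)
    (hs₂ : s₂ = -Real.log β₂ - (γ - 1) * Real.log ρ₂ - Real.log 2)
    (w₁1 w₁2 w₁3 w₂1 w₂2 w₂3 : ℝ)
    (hw₁1 : w₁1 = γ / (γ - 1) - s₁ / (γ - 1) - β₁ * u₁ ^ 2)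
    (hw₁2 : w₁2 = 2 * β₁ * u₁)
    (hw₁3 : w₁3 = -2 * β₁)
    (hw₂1 : w₂1 = γ / (γ - 1) - s₂ / (γ - 1) - β₂ * u₂ ^ 2)
    (hw₂2 : w₂2 = 2 * β₂ * u₂)
    (hw₂3 : w₂3 = -2 * β₂)
    (ρbar ubar βbar mbar qbar : ℝ)
    (hρbar : ρbar = (ρ₁ + ρ₂) / 2)
    (hubar : ubar = (u₁ + u₂) / 2)
    (hβbar : βbar = (β₁ + β₂) / 2)
    (hmbar : mbar = (ρ₁ * u₁ + ρ₂ * u₂) / 2)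
    (hqbar : qbar = (u₁ ^ 2 + u₂ ^ 2) / 2)
    (f1 f2 f3 : ℝ)
    (hf1 : f1 = mbar)
    (hf2 : f2 = ubar * mbar + ρbar / (2 * βbar))
    (hf3 : f3 = mbar / (2 * (γ - 1) * logMean β₁ β₂) - (qbar / 2) * mbar
        + ubar ^ 2 * mbar + (ρbar / (2 * βbar)) * ubar) :
    (w₂1 - w₁1) * f1 + (w₂2 - w₁2) * f2 + (w₂3 - w₁3) * f3
      = ((ρ₂ - ρ₁) / logMean ρ₁ ρ₂) * mbar + ρbar * (u₂ - u₁) :=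
  entropy_jump_dot_conv_flux_general γ ρ₁ ρ₂ β₁ β₂ u₁ u₂ hγ hβ₁ hβ₂ s₁ s₂ hs₁ hs₂ w₁1 w₁2 w₁3 w₂1
    w₂2 w₂3 hw₁1 hw₁2 hw₁3 hw₂1 hw₂2 hw₂3 ρbar ubar βbar mbar qbar hρbar hubar hβbar hmbar hqbar f1
    f2 f3 hf1 hf2 hf3
end

section
/- Fix γ > 1. Let ρ₁, ρ₂, β₁, β₂ be positive reals and (u₁, v₁, w₁), (u₂, v₂, w₂) real velocity vectors. Define sᵢ = −log βᵢ − (γ−1) log ρᵢ − log 2 and the entropy variables Wᵢ = (γ/(γ−1) − sᵢ/(γ−1) − βᵢ(uᵢ² + vᵢ² + wᵢ²), 2βᵢuᵢ, 2βᵢvᵢ, 2βᵢwᵢ, −2βᵢ). Write Δa = a₂ − a₁, ā = (a₁+a₂)/2 for any quantity a, write Q̄ = ((u₁²+v₁²+w₁²) + (u₂²+v₂²+w₂²))/2, and let ρ̂ and β̂ denote the logarithmic means of (ρ₁, ρ₂) and (β₁, β₂). Then: ΔW¹ = Δρ/ρ̂ + (1/((γ−1)β̂) − Q̄)·Δβ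 − 2ūβ̄Δu − 2v̄β̄Δv − 2w̄β̄Δw; ΔW² = 2β̄Δu + 2ūΔβ; ΔW³ = 2β̄Δv + 2v̄Δβ; ΔW⁴ = 2β̄Δw + 2w̄Δβ; ΔW⁵ = −2Δβ; where Δρ/ρ̂ is interpreted as 0 when ρ₁ = ρ₂ and Δβ/β̂ as 0 when β₁ = β₂. -/
lemma div_logMean (a b : ℝ) (ha : 0 < a) (hb : 0 < b) :
    (b - a) / logMean a b = Real.log b - Real.log a := by
  unfold logMean
  by_cases h : a = b
  · simp [h]
  · have hba : b - a ≠ 0 := sub_ne_zero.mpr fun hc => h hc.symm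
    have hlog : Real.log b - Real.log a ≠ 0 := by
      intro hc
      exact h (Real.log_injOn_pos (Set.mem_Ioi.mpr ha) (Set.mem_Ioi.mpr hb) (by linarith))
    rw [if_neg h]
    field_simp

/-- The Chandrashekar identities for the jumps of the (3-D) entropy variables. -/
theorem entropy_variable_jump_identities
    (γ ρ₁ ρ₂ β₁ β₂ u₁ v₁ w₁ u₂ v₂ w₂ : ℝ) (hγ : 1 < γ)
    (hρ₁ : 0 < ρ₁) (hρ₂ : 0 < ρ₂) (hβ₁ : 0 < β₁) (hβ₂ : 0 < β₂)
    (s₁ s₂ : ℝ)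
    (hs₁ : s₁ = -Real.log β₁ - (γ - 1) * Real.log ρ₁ - Real.log 2)
    (hs₂ : s₂ = -Real.log β₂ - (γ - 1) * Real.log ρ₂ - Real.log 2)
    (W₁1 W₁2 W₁3 W₁4 W₁5 W₂1 W₂2 W₂3 W₂4 W₂5 : ℝ)
    (hW₁1 : W₁1 = γ / (γ - 1) - s₁ / (γ - 1) - β₁ * (u₁ ^ 2 + v₁ ^ 2 + w₁ ^ 2))
    (hW₁2 : W₁2 = 2 * β₁ * u₁) (hW₁3 : W₁3 = 2 * β₁ * v₁) (hW₁4 : W₁4 = 2 * β₁ * w₁)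
    (hW₁5 : W₁5 = -2 * β₁)
    (hW₂1 : W₂1 = γ / (γ - 1) - s₂ / (γ - 1) - β₂ * (u₂ ^ 2 + v₂ ^ 2 + w₂ ^ 2))
    (hW₂2 : W₂2 = 2 * β₂ * u₂) (hW₂3 : W₂3 = 2 * β₂ * v₂) (hW₂4 : W₂4 = 2 * β₂ * w₂)
    (hW₂5 : W₂5 = -2 * β₂)
    (ubar vbar wbar βbar Qbar : ℝ)
    (hubar : ubar = (u₁ + u₂) / 2) (hvbar : vbar = (v₁ + v₂) / 2)
    (hwbar : wbar = (w₁ + w₂) / 2) (hβbar : βbar = (β₁ + β₂) / 2)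
    (hQbar : Qbar = ((u₁ ^ 2 + v₁ ^ 2 + w₁ ^ 2) + (u₂ ^ 2 + v₂ ^ 2 + w₂ ^ 2)) / 2) :
    W₂1 - W₁1 = (ρ₂ - ρ₁) / logMean ρ₁ ρ₂
        + (1 / ((γ - 1) * logMean β₁ β₂) - Qbar) * (β₂ - β₁)
        - 2 * ubar * βbar * (u₂ - u₁) - 2 * vbar * βbar * (v₂ - v₁)
        - 2 * wbar * βbar * (w₂ - w₁) ∧
      W₂2 - W₁2 = 2 * βbar * (u₂ - u₁) + 2 * ubar * (β₂ - β₁) ∧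
      W₂3 - W₁3 = 2 * βbar * (v₂ - v₁) + 2 * vbar * (β₂ - β₁) ∧
      W₂4 - W₁4 = 2 * βbar * (w₂ - w₁) + 2 * wbar * (β₂ - β₁) ∧
      W₂5 - W₁5 = -2 * (β₂ - β₁) := by
  have hγ1 : γ - 1 ≠ 0 := by linarith
  have hρ := div_logMean ρ₁ ρ₂ hρ₁ hρ₂
  have hβ := div_logMean β₁ β₂ hβ₁ hβ₂
  have hlm : logMean β₁ β₂ ≠ 0 := by
    intro hc
    rw [hc, div_zero] at hβ
    have heq : β₁ = β₂ := Real.log_injOn_pos (Set.mem_Ioi.mpr hβ₁) (Set.mem_Ioi.mpr hβ₂) (by linarith)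
    rw [logMean, if_pos heq] at hc
    exact hβ₁.ne' hc
  refine ⟨?_, by subst_vars; ring, by subst_vars; ring, by subst_vars; ring, by subst_vars; ring⟩
  have key : (β₂ - β₁) / logMean β₁ β₂ = Real.log β₂ - Real.log β₁ := hβ
  have key2 : 1 / ((γ - 1) * logMean β₁ β₂) * (β₂ - β₁)
      = (Real.log β₂ - Real.log β₁) / (γ - 1) := by
    rw [← key, div_div, one_div, inv_mul_eq_div, mul_comm (γ - 1)]
  subst hW₁1 hW₂1 hs₁ hs₂
  rw [sub_mul (1 / ((γ - 1) * logMean β₁ β₂)) Qbar (β₂ - β₁), key2, hρ]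
  subst hubar hvbar hwbar hβbar hQbar
  field_simp
  ring
end

section
/- Let Ω ⊂ ℝ³ be a bounded Lebesgue-measurable set with |Ω| > 0, and let ρ : Ω → [0, ∞) be integrable with total mass M₀ = ∫_Ω ρ dx > 0. Suppose additionally that ∫_Ω ρ·max(log ρ, 0) dx ≤ C for some finite C ≥ 0 (with the integrand interpreted as 0 where ρ = 0). Set δ = M₀/(3|Ω|) and α = max(e, exp(3C/M₀)). Then the set where the density exceeds δ has measure bounded below: |{x ∈ Ω : ρ(x) > δ}| ≥ M₀/(3α) > 0. -/
/-!
Split `Ω` according to whether `ρ ≤ δ`, `δ < ρ ≤ α` or `α < ρ`. Pointwise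
`ρ ≤ δ + α · 𝟙{ρ > δ} + ρ log⁺ ρ / log α`, and integrating over `Ω` gives
`M₀ ≤ δ |Ω| + α |{ρ > δ}| + C / log α`. The choice of `δ` makes the first term `M₀ / 3`
and the choice of `α` makes `log α ≥ 3C / M₀`, so the last one is at most `M₀ / 3` too.
-/

open MeasureTheory Real Set

lemma le_add_ite_add_mul_posLog_div {r δ a : ℝ} (hr : 0 ≤ r) (hδ : 0 ≤ δ) (ha : 1 < a) :
    r ≤ δ + (if δ < r then a else 0) + r * log⁺ r / log a := by
  have hloga : 0 < log a := log_pos ha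
  have htail : 0 ≤ r * log⁺ r / log a := by have := posLog_nonneg (x := r); positivity
  split_ifs with hδr
  · rcases le_or_gt r a with hra | har
    · linarith
    · have hlog : log a ≤ log⁺ r := (log_le_log (by linarith) har.le).trans (le_max_right _ _)
      have : r ≤ r * log⁺ r / log a := by
        rw [le_div_iff₀ hloga]
        exact mul_le_mul_of_nonneg_left hlog hr
      linarith
  · linarith

theorem integral_le_add_measureReal_lt_add_integral_mul_posLog_div {X : Type*}
    [MeasurableSpace X] {μ : Measure X} [IsFiniteMeasure μ] {f : X → ℝ} (hf : Integrable f μ)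
    (hf0 : 0 ≤ᵐ[μ] f) (hflog : Integrable (fun x ↦ f x * log⁺ (f x)) μ) {δ a : ℝ}
    (hδ : 0 ≤ δ) (ha : 1 < a) :
    ∫ x, f x ∂μ ≤
      δ * μ.real univ + a * μ.real {x | δ < f x} + (∫ x, f x * log⁺ (f x) ∂μ) / log a := by
  have hlevel : NullMeasurableSet {x | δ < f x} μ :=
    aestronglyMeasurable_const.nullMeasurableSet_lt hf.1
  have hind : Integrable ({x | δ < f x}.indicator fun _ ↦ a) μ :=
    (integrable_const a).indicator₀ hlevel
  calc ∫ x, f x ∂μ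
      ≤ ∫ x, (δ + {x | δ < f x}.indicator (fun _ ↦ a) x + f x * log⁺ (f x) / log a) ∂μ := by
        refine integral_mono_ae hf (((integrable_const δ).add hind).add (hflog.div_const _)) ?_
        filter_upwards [hf0] with x hx
        simpa only [indicator_apply, mem_ofPred_eq] using le_add_ite_add_mul_posLog_div hx hδ ha
    _ = δ * μ.real univ + a * μ.real {x | δ < f x} + (∫ x, f x * log⁺ (f x) ∂μ) / log a := by
        rw [integral_add ?_ (hflog.div_const _), integral_add (integrable_const δ) hind,
          integral_const, integral_indicator₀ hlevel,
          setIntegral_const, integral_div, smul_eq_mul, smul_eq_mul, mul_comm δ, mul_comm a]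
        exact (integrable_const δ).add hind

lemma log_max_exp_one_exp (t : ℝ) : log (max (exp 1) (exp t)) = max 1 t := by
  rw [← exp_monotone.map_max, log_exp]

theorem density_above_threshold_measure_general
    (Ω : Set (EuclideanSpace ℝ (Fin 3)))
    (hΩm : MeasurableSet Ω) (hΩb : Bornology.IsBounded Ω) (hΩpos : 0 < volume Ω)
    (ρ : EuclideanSpace ℝ (Fin 3) → ℝ)
    (hρ0 : ∀ x ∈ Ω, 0 ≤ ρ x)
    (hρint : IntegrableOn ρ Ω)
    (M₀ C : ℝ)
    (hM₀def : M₀ = ∫ x in Ω, ρ x) (hM₀pos : 0 < M₀)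
    (hlogint : IntegrableOn (fun x => ρ x * max (Real.log (ρ x)) 0) Ω)
    (hlog : (∫ x in Ω, ρ x * max (Real.log (ρ x)) 0) ≤ C) :
    ENNReal.ofReal (M₀ / (3 * max (Real.exp 1) (Real.exp (3 * C / M₀))))
        ≤ volume {x ∈ Ω | M₀ / (3 * (volume Ω).toReal) < ρ x} ∧
      0 < M₀ / (3 * max (Real.exp 1) (Real.exp (3 * C / M₀))) := by
  set α := max (exp 1) (exp (3 * C / M₀))
  set δ := M₀ / (3 * (volume Ω).toReal)
  set μ := volume.restrict Ω
  have : IsFiniteMeasure μ := isFiniteMeasure_restrict.2 hΩb.measure_lt_top.ne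
  have hΩ : 0 < (volume Ω).toReal := ENNReal.toReal_pos hΩpos.ne' hΩb.measure_lt_top.ne
  have hα : 1 < α := (one_lt_exp_iff.2 one_pos).trans_le (le_max_left _ _)
  have hlogα : 3 * C / M₀ ≤ log α := (log_max_exp_one_exp _).symm ▸ le_max_right _ _
  have hposLog : (fun x ↦ ρ x * max (log (ρ x)) 0) = fun x ↦ ρ x * log⁺ (ρ x) := by
    simp only [posLog, max_comm]
  have hmass := integral_le_add_measureReal_lt_add_integral_mul_posLog_div hρint
    (ae_restrict_of_forall_mem hΩm hρ0) (hposLog ▸ hlogint) (δ := δ) (by positivity) hα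
  have hlow : δ * μ.real univ = M₀ / 3 := by
    rw [measureReal_restrict_apply_univ, measureReal_def]
    simp only [δ]
    field_simp
  have hhigh : (∫ x, ρ x * log⁺ (ρ x) ∂μ) / log α ≤ M₀ / 3 := by
    rw [div_le_iff₀ (log_pos hα), ← hposLog]
    rw [div_le_iff₀ hM₀pos] at hlogα
    linarith
  have hsuper : volume {x ∈ Ω | δ < ρ x} = μ {x | δ < ρ x} := by
    rw [Measure.restrict_apply' hΩm, inter_comm]; rfl
  refine ⟨?_, by positivity⟩
  rw [hsuper, ENNReal.ofReal_le_iff_le_toReal (measure_ne_top _ _), div_le_iff₀ (by positivity)]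
  change M₀ ≤ μ.real _ * (3 * α)
  linarith [hM₀def]

/-- No large vacuum regions: if `ρ ≥ 0` on a bounded measurable `Ω ⊂ ℝ³` of positive
measure with total mass `M₀ > 0` and `∫ ρ·max(log ρ, 0) ≤ C`, then with
`δ = M₀/(3|Ω|)` and `α = max(e, exp(3C/M₀))`, the set `{ρ > δ}` has measure at least
`M₀/(3α) > 0`. -/
theorem density_above_threshold_measure
    (Ω : Set (EuclideanSpace ℝ (Fin 3)))
    (hΩm : MeasurableSet Ω) (hΩb : Bornology.IsBounded Ω) (hΩpos : 0 < volume Ω)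
    (ρ : EuclideanSpace ℝ (Fin 3) → ℝ)
    (hρ0 : ∀ x ∈ Ω, 0 ≤ ρ x)
    (hρint : IntegrableOn ρ Ω)
    (M₀ C : ℝ)
    (hM₀def : M₀ = ∫ x in Ω, ρ x) (hM₀pos : 0 < M₀)
    (hC0 : 0 ≤ C)
    (hlogint : IntegrableOn (fun x => ρ x * max (Real.log (ρ x)) 0) Ω)
    (hlog : (∫ x in Ω, ρ x * max (Real.log (ρ x)) 0) ≤ C) :
    ENNReal.ofReal (M₀ / (3 * max (Real.exp 1) (Real.exp (3 * C / M₀))))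
        ≤ volume {x ∈ Ω | M₀ / (3 * (volume Ω).toReal) < ρ x} ∧
      0 < M₀ / (3 * max (Real.exp 1) (Real.exp (3 * C / M₀))) :=
  density_above_threshold_measure_general Ω hΩm hΩb hΩpos ρ hρ0 hρint M₀ C hM₀def hM₀pos hlogint
    hlog
end

section
/- Let 0 < ω < 1 and let a, b be real numbers with 0 ≤ a ≤ b. Then ((1+a)^{−ω} − (1+b)^{−ω})·(b⁴ − a⁴) ≥ ω·(1+b)^{−ω−1}·b³·(b − a)². -/
/-! For a nonpositive exponent `p` the map `x ↦ x ^ p` lies above its tangents on `(0, ∞)`,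
since `t ^ p = exp (p log t) ≥ 1 + p log t ≥ 1 + p (t - 1)`. The tangent at `1 + b`, evaluated at
`1 + a`, bounds `(1+a)^{-ω} - (1+b)^{-ω}` below by `ω (1+b)^{-ω-1} (b - a)`; the remaining factor
is handled by `b⁴ - a⁴ ≥ b³ (b - a)`. -/

open Real

lemma one_add_mul_sub_one_le_rpow_of_nonpos {p t : ℝ} (hp : p ≤ 0) (ht : 0 < t) :
    1 + p * (t - 1) ≤ t ^ p := by
  have hlog : p * (t - 1) ≤ log t * p := by
    rw [mul_comm]
    exact mul_le_mul_of_nonpos_right (log_le_sub_one_of_pos ht) hp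
  calc 1 + p * (t - 1) ≤ log t * p + 1 := by linarith
    _ ≤ exp (log t * p) := add_one_le_exp _
    _ = t ^ p := (rpow_def_of_pos ht p).symm

lemma rpow_add_mul_rpow_sub_one_mul_sub_le_rpow {p x y : ℝ} (hp : p ≤ 0) (hx : 0 < x)
    (hy : 0 < y) : y ^ p + p * y ^ (p - 1) * (x - y) ≤ x ^ p := by
  have hbern := one_add_mul_sub_one_le_rpow_of_nonpos hp (div_pos hx hy)
  rw [div_rpow hx.le hy.le, le_div_iff₀ (rpow_pos_of_pos hy p)] at hbern
  calc y ^ p + p * y ^ (p - 1) * (x - y) = (1 + p * (x / y - 1)) * y ^ p := by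
        rw [rpow_sub_one hy.ne']
        field_simp
    _ ≤ x ^ p := hbern

lemma pow_mul_sub_le_pow_succ_sub_pow_succ {a b : ℝ} (ha : 0 ≤ a) (hab : a ≤ b) (n : ℕ) :
    b ^ n * (b - a) ≤ b ^ (n + 1) - a ^ (n + 1) := by
  have hpow : a ^ n ≤ b ^ n := pow_le_pow_left₀ ha hab n
  have hgap : b ^ (n + 1) - a ^ (n + 1) - b ^ n * (b - a) = a * (b ^ n - a ^ n) := by ring
  linarith [mul_nonneg ha (sub_nonneg.mpr hpow)]

theorem renormalised_dissipation_bound_general (ω a b : ℝ) (hω0 : 0 < ω)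
    (ha : 0 ≤ a) (hab : a ≤ b) :
    ((1 + a) ^ (-ω) - (1 + b) ^ (-ω)) * (b ^ 4 - a ^ 4)
      ≥ ω * (1 + b) ^ (-ω - 1) * b ^ 3 * (b - a) ^ 2 := by
  have hb : 0 ≤ b := ha.trans hab
  have hslope : 0 ≤ ω * (1 + b) ^ (-ω - 1) := by positivity
  have htangent : ω * (1 + b) ^ (-ω - 1) * (b - a) ≤ (1 + a) ^ (-ω) - (1 + b) ^ (-ω) := by
    have := rpow_add_mul_rpow_sub_one_mul_sub_le_rpow (neg_nonpos.mpr hω0.le)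
      (by linarith : (0 : ℝ) < 1 + a) (by linarith : (0 : ℝ) < 1 + b)
    linarith
  have hquartic : b ^ 3 * (b - a) ≤ b ^ 4 - a ^ 4 := pow_mul_sub_le_pow_succ_sub_pow_succ ha hab 3
  have hgap : 0 ≤ b - a := sub_nonneg.mpr hab
  calc ω * (1 + b) ^ (-ω - 1) * b ^ 3 * (b - a) ^ 2
      = ω * (1 + b) ^ (-ω - 1) * (b - a) * (b ^ 3 * (b - a)) := by ring
    _ ≤ ((1 + a) ^ (-ω) - (1 + b) ^ (-ω)) * (b ^ 4 - a ^ 4) :=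
        mul_le_mul htangent hquartic (by positivity) ((mul_nonneg hslope hgap).trans htangent)

/-- Discrete renormalised internal-energy dissipation bound: for `0 < ω < 1` and
`0 ≤ a ≤ b`, `((1+a)^{−ω} − (1+b)^{−ω})(b⁴ − a⁴) ≥ ω(1+b)^{−ω−1} b³ (b − a)²`. -/
theorem renormalised_dissipation_bound (ω a b : ℝ) (hω0 : 0 < ω) (hω1 : ω < 1)
    (ha : 0 ≤ a) (hab : a ≤ b) :
    ((1 + a) ^ (-ω) - (1 + b) ^ (-ω)) * (b ^ 4 - a ^ 4)
      ≥ ω * (1 + b) ^ (-ω - 1) * b ^ 3 * (b - a) ^ 2 :=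
  renormalised_dissipation_bound_general ω a b hω0 ha hab
end
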